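/- Let f : U → V be a linear map of finite-dimensional real inner product spaces. Then det⊥(f) = det⊥(f*) = √(det⊥(f*f)) = √(det⊥(ff*)). -/

import Mathlib

/-!
On `(ker f)ᗮ` the map `f` restricts to an isomorphism onto `range f = (ker f*)ᗮ` that
intertwines the compressions of `f* f` and `f f*` to these spaces, so the two compressions have
the same determinant: `det⊥ f = det⊥ f*`. Since `f* f` is self-adjoint with the same kernel as
`f`, the Gram operator of `f* f` is `(f* f)²`, whose compression to `(ker f)ᗮ` is the square of
that of `f* f`; as determinants of positive operators are nonnegative, `det⊥ (f* f) = (det⊥ f)²`.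
Applied to `f*` this gives the last identity.
-/

/-- `det⊥(f)`: for a linear map `f : V → W` of finite-dimensional real inner product
spaces, `detPerp f = 1` if `f = 0`, and otherwise it is the square root of the determinant
of the endomorphism of the orthogonal complement of `ker (f* ∘ f)` induced by `f* ∘ f`. -/
noncomputable def detPerp {V W : Type*} [NormedAddCommGroup V] [InnerProductSpace ℝ V]
    [NormedAddCommGroup W] [InnerProductSpace ℝ W]
    [FiniteDimensional ℝ V] [FiniteDimensional ℝ W] (f : V →ₗ[ℝ] W) : ℝ :=
  letI := Classical.propDecidable (f = 0)
  if f = 0 then 1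
  else Real.sqrt (LinearMap.det
    ((Submodule.orthogonalProjectionOnto (LinearMap.ker (LinearMap.adjoint f ∘ₗ f))ᗮ).toLinearMap
      ∘ₗ (LinearMap.adjoint f ∘ₗ f)
      ∘ₗ (LinearMap.ker (LinearMap.adjoint f ∘ₗ f))ᗮ.subtype))

open LinearMap Submodule
open scoped InnerProductSpace ComplexOrder

namespace Submodule

variable {𝕜 E : Type*} [RCLike 𝕜] [NormedAddCommGroup E] [InnerProductSpace 𝕜 E]
  (K : Submodule 𝕜 E) [K.HasOrthogonalProjection]

noncomputable def compression (T : E →ₗ[𝕜] E) : K →ₗ[𝕜] K :=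
  K.orthogonalProjectionOnto.toLinearMap ∘ₗ T ∘ₗ K.subtype

variable {K}

theorem coe_compression_apply_of_mem {T : E →ₗ[𝕜] E} {x : K} (hx : T x ∈ K) :
    (K.compression T x : E) = T x :=
  congrArg Subtype.val (orthogonalProjectionOnto_mem_subspace_eq_self ⟨T x, hx⟩)

theorem compression_comp {T S : E →ₗ[𝕜] E} (hS : ∀ x ∈ K, S x ∈ K) :
    K.compression (T ∘ₗ S) = K.compression T ∘ₗ K.compression S := by
  ext x
  simp only [compression, coe_comp, Function.comp_apply, ContinuousLinearMap.coe_coe,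
    coe_subtype, orthogonalProjectionOnto_mem_subspace_eq_self ⟨S x, hS x x.2⟩]

end Submodule

namespace LinearMap

variable {𝕜 E F : Type*} [RCLike 𝕜] [NormedAddCommGroup E] [InnerProductSpace 𝕜 E]
  [NormedAddCommGroup F] [InnerProductSpace 𝕜 F]

theorem IsPositive.compression {T : E →ₗ[𝕜] E} (hT : T.IsPositive) (K : Submodule 𝕜 E)
    [K.HasOrthogonalProjection] : (K.compression T).IsPositive := by
  refine ⟨fun x y => ?_, fun x => ?_⟩
  · simpa [Submodule.compression] using hT.isSymmetric x y
  · simpa [Submodule.compression] using hT.re_inner_nonneg_left x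

theorem IsPositive.det_nonneg [FiniteDimensional 𝕜 E] {T : E →ₗ[𝕜] E} (hT : T.IsPositive) :
    0 ≤ T.det := by
  let b := stdOrthonormalBasis 𝕜 E
  rw [← det_toMatrix b.toBasis]
  exact ((posSemidef_toMatrix_iff b).mpr hT).det_nonneg

variable [FiniteDimensional 𝕜 E] [FiniteDimensional 𝕜 F]

theorem adjoint_apply_mem_orthogonal_ker (f : E →ₗ[𝕜] F) (y : F) : f.adjoint y ∈ f.kerᗮ :=
  f.orthogonal_ker.ge (mem_range_self _ y)

theorem det_compression_adjoint_comp_self (f : E →ₗ[𝕜] F) :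
    (f.kerᗮ.compression (f.adjoint ∘ₗ f)).det =
      (f.adjoint.kerᗮ.compression (f ∘ₗ f.adjoint)).det := by
  have hrange : f.range = f.adjoint.kerᗮ := by rw [orthogonal_ker, adjoint_adjoint]
  let e := (f.kerComplementEquivRange f.ker.isCompl_orthogonal.symm).trans
    (LinearEquiv.ofEq _ _ hrange)
  have intertwine : e ∘ₗ f.kerᗮ.compression (f.adjoint ∘ₗ f) =
      f.adjoint.kerᗮ.compression (f ∘ₗ f.adjoint) ∘ₗ e := by
    ext x
    have hx : (f.adjoint ∘ₗ f) x ∈ f.kerᗮ := f.adjoint_apply_mem_orthogonal_ker (f x)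
    have hex : (f ∘ₗ f.adjoint) (e x) ∈ f.adjoint.kerᗮ := hrange.le (mem_range_self _ _)
    have he : ∀ y, (e y : F) = f y := fun _ => rfl
    simp only [coe_comp, LinearEquiv.coe_coe, Function.comp_apply]
    rw [coe_compression_apply_of_mem hex, he, he, coe_compression_apply_of_mem hx]
    rfl
  rw [← det_conj _ e, ← comp_assoc, intertwine, comp_assoc]
  simp

end LinearMap

section DetPerp

variable {U V : Type*} [NormedAddCommGroup U] [InnerProductSpace ℝ U] [FiniteDimensional ℝ U]
  [NormedAddCommGroup V] [InnerProductSpace ℝ V] [FiniteDimensional ℝ V]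

theorem detPerp_zero : detPerp (0 : U →ₗ[ℝ] V) = 1 :=
  if_pos rfl

theorem detPerp_of_ne_zero {f : U →ₗ[ℝ] V} (hf : f ≠ 0) :
    detPerp f = √(f.kerᗮ.compression (f.adjoint ∘ₗ f)).det := by
  rw [detPerp, if_neg hf, ← ker_adjoint_comp_self f]
  rfl

theorem detPerp_nonneg (f : U →ₗ[ℝ] V) : 0 ≤ detPerp f := by
  unfold detPerp
  split_ifs <;> positivity

theorem detPerp_adjoint (f : U →ₗ[ℝ] V) : detPerp f.adjoint = detPerp f := by
  by_cases hf : f = 0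
  · simp [hf, detPerp_zero]
  rw [detPerp_of_ne_zero hf, detPerp_of_ne_zero (by simpa), adjoint_adjoint,
    det_compression_adjoint_comp_self]

theorem detPerp_adjoint_comp_self (f : U →ₗ[ℝ] V) :
    detPerp (f.adjoint ∘ₗ f) = detPerp f ^ 2 := by
  by_cases hf : f = 0
  · simp [hf, detPerp_zero]
  have hgram : f.adjoint ∘ₗ f ≠ 0 := by
    rwa [ne_eq, ← ker_eq_top, ker_adjoint_comp_self, ker_eq_top]
  have hmaps : ∀ x ∈ f.kerᗮ, (f.adjoint ∘ₗ f) x ∈ f.kerᗮ := fun x _ =>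
    f.adjoint_apply_mem_orthogonal_ker (f x)
  rw [detPerp_of_ne_zero hgram, detPerp_of_ne_zero hf,
    (isSymmetric_adjoint_comp_self f).adjoint_eq, ker_adjoint_comp_self, compression_comp hmaps,
    det_comp, ← sq, Real.sqrt_sq ((isPositive_adjoint_comp_self f).compression _).det_nonneg,
    Real.sq_sqrt ((isPositive_adjoint_comp_self f).compression _).det_nonneg]

end DetPerp

/-- `det⊥(f) = det⊥(f*) = √(det⊥(f* ∘ f)) = √(det⊥(f ∘ f*))` for a linear map `f : U → V`
of finite-dimensional real inner product spaces. -/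
theorem detPerp_adjoint_sqrt {U V : Type*}
    [NormedAddCommGroup U] [InnerProductSpace ℝ U] [FiniteDimensional ℝ U]
    [NormedAddCommGroup V] [InnerProductSpace ℝ V] [FiniteDimensional ℝ V]
    (f : U →ₗ[ℝ] V) :
    detPerp f = detPerp (LinearMap.adjoint f) ∧
    detPerp f = Real.sqrt (detPerp (LinearMap.adjoint f ∘ₗ f)) ∧
    detPerp f = Real.sqrt (detPerp (f ∘ₗ LinearMap.adjoint f)) := by
  have hcoadjoint := detPerp_adjoint_comp_self f.adjoint
  rw [adjoint_adjoint, detPerp_adjoint] at hcoadjoint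
  refine ⟨(detPerp_adjoint f).symm, ?_, ?_⟩
  · rw [detPerp_adjoint_comp_self, Real.sqrt_sq (detPerp_nonneg f)]
  · rw [hcoadjoint, Real.sqrt_sq (detPerp_nonneg f)]
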